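/- θ-relation: in the homology of the configuration spaces of the theta graph Θ₃, the clockwise-oriented star classes α and α' at the two essential vertices are equal: α − α' = 0 in H₁(B₂(Θ₃)). -/

import Mathlib

/-!
A combinatorial model of the Świątkowski chain complex of a finite graph
(finite CW-complex of dimension ≤ 1), computing the homology of its unordered
configuration spaces (An–Drummond-Cole–Knudsen).

A graph is given by a vertex type `V`, an edge type `E` and an endpoint map
`ends : E → V × V` (self-loops and multiple edges are allowed).  A half-edge is
a pair `(e, b) : E × Bool`, whose vertex is the corresponding endpoint of `e`.

We work with the ℤ-basis of the Świątkowski complex consisting of a monomial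
`m : E →₀ ℕ` in the edges together with a choice, for each vertex `v`, of a
local generator from `S(v) = ℤ⟨∅, v, h ∈ H(v)⟩`: a half-edge at `v`
(`Sum.inl`), the vertex itself (`Sum.inr true`), or `∅` (`Sum.inr false`).
The differential is the ℤ[E]-linear derivation with `∂h = e(h) - v(h)`,
with Koszul signs determined by a fixed enumeration of the vertices.
`degB` is the homological degree (number of half-edge factors) and `wtB` is the
weight (number of particles).  `hasDW i k` is the subgroup of chains of pure
degree `i` and weight `k`; `cyc i k` the corresponding cycles, `bdry i k` the
boundaries of degree/weight `(i+1, k)` chains, and `Hgr i k` their quotient,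
which is `H_i(B_k Γ)`.  `stab e` is edge stabilization (multiplication by `e`).
-/

namespace Swiatkowski

variable {V E : Type} [Fintype V] [Fintype E] [DecidableEq V] [DecidableEq E]

/-- The vertex of a half-edge. -/
def vtx (ends : E → V × V) (h : E × Bool) : V :=
  cond h.2 (ends h.1).2 (ends h.1).1

/-- The local generators at a vertex `v`: a half-edge at `v`, or the vertex
generator (`true`), or `∅` (`false`). -/
abbrev VGen (ends : E → V × V) (v : V) : Type :=
  {h : E × Bool // vtx ends h = v} ⊕ Bool

/-- A choice of local generator at every vertex. -/
abbrev States (ends : E → V × V) : Type := ∀ v : V, VGen ends v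

/-- The ℤ-basis of the Świątkowski complex: an edge monomial together with a
state. -/
abbrev Bas (ends : E → V × V) : Type := (E →₀ ℕ) × States ends

/-- The underlying ℤ-module of the Świątkowski complex. -/
abbrev SC (ends : E → V × V) : Type := Bas ends →₀ ℤ

variable (ends : E → V × V)

/-- An enumeration of the vertices, used for Koszul signs. -/
noncomputable def idx : V → ℕ := fun v => ((Fintype.equivFin V) v : ℕ)

/-- The Koszul sign of the half-edge slot at `v` inside the state `f`. -/
noncomputable def sgn (f : States ends) (v : V) : ℤ :=
  (-1) ^ (Finset.univ.filter fun w => idx w < idx v ∧ (f w).isLeft = true).card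

/-- Homological degree of a basis element: its number of half-edge factors. -/
def degB (b : Bas ends) : ℕ :=
  (Finset.univ.filter fun v => (b.2 v).isLeft = true).card

/-- Weight (particle number) of a basis element. -/
def wtB (b : Bas ends) : ℕ :=
  (b.1.sum fun _ n => n) + ∑ v : V, Sum.elim (fun _ => 1) (fun t => cond t 1 0) (b.2 v)

/-- Value of the differential on a basis element: the signed sum over the
half-edge slots `h` of the substitutions `h ↦ e(h)` and `h ↦ v(h)`. -/
noncomputable def Db (b : Bas ends) : SC ends :=
  ∑ v : V,
    (match b.2 v with
      | Sum.inl h =>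
          sgn ends b.2 v •
            (Finsupp.single (b.1 + Finsupp.single h.1.1 1,
                Function.update b.2 v (Sum.inr false)) (1 : ℤ)
              - Finsupp.single (b.1, Function.update b.2 v (Sum.inr true)) (1 : ℤ))
      | Sum.inr _ => 0)

/-- The differential of the Świątkowski complex. -/
noncomputable def D : SC ends →ₗ[ℤ] SC ends :=
  Finsupp.linearCombination ℤ (Db ends)

/-- The subgroup of chains of pure homological degree `i` and weight `k`. -/
noncomputable def hasDW (i k : ℕ) : Submodule ℤ (SC ends) where
  carrier := {x | ∀ b ∈ x.support, degB ends b = i ∧ wtB ends b = k}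
  add_mem' := by
    intro x y hx hy b hb
    rcases Finset.mem_union.mp (Finsupp.support_add hb) with h | h
    exacts [hx b h, hy b h]
  zero_mem' := by simp
  smul_mem' := by
    intro c x hx b hb
    exact hx b (Finsupp.support_smul hb)

/-- Cycles of degree `i` and weight `k`. -/
noncomputable def cyc (i k : ℕ) : Submodule ℤ (SC ends) := LinearMap.ker (D ends) ⊓ hasDW ends i k

/-- Boundaries of degree `i` and weight `k` chains. -/
noncomputable def bdry (i k : ℕ) : Submodule ℤ (SC ends) := Submodule.map (D ends) (hasDW ends (i + 1) k)

/-- The homology `H_i(B_k Γ)` of the weight-`k` Świątkowski complex. -/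
noncomputable def Hgr (i k : ℕ) :=
  cyc ends i k ⧸ Submodule.comap (cyc ends i k).subtype (bdry ends i k)

noncomputable instance (i k : ℕ) : AddCommGroup (Hgr ends i k) :=
  inferInstanceAs (AddCommGroup
    (cyc ends i k ⧸ Submodule.comap (cyc ends i k).subtype (bdry ends i k)))

/-- Edge stabilization: multiplication by the edge `e`. -/
noncomputable def stab (e : E) : SC ends →ₗ[ℤ] SC ends :=
  Finsupp.lmapDomain ℤ ℤ fun b => (b.1 + Finsupp.single e 1, b.2)

end Swiatkowski

namespace Theta3

open Swiatkowski

/-- The theta graph `Θ₃`: two vertices (`false` and `true`) joined by three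
edges. -/
def ends : Fin 3 → Bool × Bool := fun _ => (false, true)

/-- The state placing the half-edge of edge `j` at the vertex `u`, with `∅` at
the other vertex. -/
def stateH (u : Bool) (j : Fin 3) : States ends := fun w =>
  match w with
  | false => if u = false then Sum.inl ⟨(j, false), rfl⟩ else Sum.inr false
  | true => if u = true then Sum.inl ⟨(j, true), rfl⟩ else Sum.inr false

/-- The degree-one basis chain `h_{u,j}`. -/
noncomputable def sH (u : Bool) (j : Fin 3) : SC ends :=
  Finsupp.single ((0 : Fin 3 →₀ ℕ), stateH u j) (1 : ℤ)

/-- The clockwise star cycle `α` at the first vertex: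
`e₃(h₁ − h₂) + e₂(h₃ − h₁) + e₁(h₂ − h₃)`. -/
noncomputable def starCyc₁ : SC ends :=
  stab ends 2 (sH false 0 - sH false 1) + stab ends 1 (sH false 2 - sH false 0)
    + stab ends 0 (sH false 1 - sH false 2)

/-- The clockwise star cycle `α'` at the second vertex; in a fixed planar
embedding the clockwise order of the half-edges at the second vertex is the
reverse of that at the first, giving the ordering `(h₂, h₁, h₃)`:
`e₃(h₂ − h₁) + e₁(h₃ − h₂) + e₂(h₁ − h₃)`. -/
noncomputable def starCyc₂ : SC ends :=
  stab ends 2 (sH true 1 - sH true 0) + stab ends 0 (sH true 2 - sH true 1)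
    + stab ends 1 (sH true 0 - sH true 2)

end Theta3

/-!
Take `z = Σ ε_{ijk} h_i h'_j`, summed over ordered pairs of distinct edges, where `h_i`, `h'_j`
are the half-edges of `e_i` at the two vertices and `ε` is the Levi-Civita symbol. Applying `∂`
to `h_i h'_j` gives `±((e_i - v) h'_j - (e_j - v') h_i)`. The vertex terms cancel in `∂z`,
since every row and column of `ε` sums to zero, and the edge terms assemble to `α - α'`.
-/

namespace Swiatkowski

variable {V E : Type} (ends : E → V × V)

lemma idx_injective [Fintype V] : Function.Injective (idx : V → ℕ) :=
  fun _ _ h => (Fintype.equivFin V).injective (Fin.ext h)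

lemma single_mem_hasDW [Fintype V] [DecidableEq E] {b : Bas ends} {i k : ℕ}
    (hd : degB ends b = i) (hw : wtB ends b = k) (c : ℤ) :
    Finsupp.single b c ∈ hasDW ends i k := by
  intro b' hb'
  rw [Finset.mem_singleton.mp (Finsupp.support_single_subset hb')]
  exact ⟨hd, hw⟩

lemma stab_single (e : E) (b : Bas ends) (c : ℤ) :
    stab ends e (Finsupp.single b c) = Finsupp.single (b.1 + Finsupp.single e 1, b.2) c :=
  Finsupp.mapDomain_single

lemma Db_of_forall_eq_inl [Fintype V] [DecidableEq V] (b : Bas ends)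
    (h : ∀ v, {h : E × Bool // vtx ends h = v}) (hb : ∀ v, b.2 v = Sum.inl (h v)) :
    Db ends b = ∑ v, sgn ends b.2 v •
      (Finsupp.single (b.1 + Finsupp.single (h v).1.1 1, Function.update b.2 v (Sum.inr false)) 1
        - Finsupp.single (b.1, Function.update b.2 v (Sum.inr true)) 1) := by
  refine Finset.sum_congr rfl fun v _ => ?_
  rw [hb v]

lemma sgn_bool_of_isLeft {ends : E → Bool × Bool} {f : States ends} {v : Bool}
    (hf : (f !v).isLeft) :
    sgn ends f v = if idx (!v) < idx v then -1 else 1 := by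
  have hfilter : (Finset.univ.filter fun w => idx w < idx v ∧ (f w).isLeft = true) =
      if idx (!v) < idx v then {!v} else ∅ := by
    cases v
    · change (f true).isLeft = true at hf
      ext w; cases w <;> split_ifs <;> simp_all
    · change (f false).isLeft = true at hf
      ext w; cases w <;> split_ifs <;> simp_all
  rw [sgn, hfilter]
  split_ifs <;> simp

end Swiatkowski

namespace Theta3

open Swiatkowski

def stateHH (i j : Fin 3) : States ends
  | false => Sum.inl ⟨(i, false), rfl⟩
  | true => Sum.inl ⟨(j, true), rfl⟩

def stateHV (i : Fin 3) : States ends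
  | false => Sum.inl ⟨(i, false), rfl⟩
  | true => Sum.inr true

def stateVH (j : Fin 3) : States ends
  | false => Sum.inr true
  | true => Sum.inl ⟨(j, true), rfl⟩

lemma stateHH_update_false_empty (i j : Fin 3) :
    Function.update (stateHH i j) false (Sum.inr false) = stateH true j := by
  funext w; cases w <;> rfl

lemma stateHH_update_true_empty (i j : Fin 3) :
    Function.update (stateHH i j) true (Sum.inr false) = stateH false i := by
  funext w; cases w <;> rfl

lemma stateHH_update_false_vertex (i j : Fin 3) :
    Function.update (stateHH i j) false (Sum.inr true) = stateVH j := by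
  funext w; cases w <;> rfl

lemma stateHH_update_true_vertex (i j : Fin 3) :
    Function.update (stateHH i j) true (Sum.inr true) = stateHV i := by
  funext w; cases w <;> rfl

/-- `idx` comes from `Fintype.equivFin`, so which vertex of `Θ₃` is enumerated first is not
determined; this is the resulting Koszul sign at the first vertex. It enters `∂z` squared. -/
noncomputable def koszul : ℤ := if idx true < idx false then -1 else 1

lemma koszul_mul_self : koszul * koszul = 1 := by
  unfold koszul; split_ifs <;> norm_num

lemma sgn_stateHH_false (i j : Fin 3) : sgn ends (stateHH i j) false = koszul :=
  sgn_bool_of_isLeft rfl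

lemma sgn_stateHH_true (i j : Fin 3) : sgn ends (stateHH i j) true = -koszul := by
  have hne : idx false ≠ idx true := idx_injective.ne Bool.false_ne_true
  rw [sgn_bool_of_isLeft rfl, Bool.not_true, koszul]
  split_ifs <;> first | rfl | omega

lemma D_single_stateHH (i j : Fin 3) :
    D ends (Finsupp.single (0, stateHH i j) 1) =
      koszul • (stab ends i (sH true j) - Finsupp.single (0, stateVH j) 1)
        - koszul • (stab ends j (sH false i) - Finsupp.single (0, stateHV i) 1) := by
  rw [D, Finsupp.linearCombination_single, one_smul,
    Db_of_forall_eq_inl ends _ (fun v => Bool.rec ⟨(i, false), rfl⟩ ⟨(j, true), rfl⟩ v)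
      (fun v => by cases v <;> rfl), Fintype.sum_bool]
  simp only [stateHH_update_false_empty, stateHH_update_true_empty,
    stateHH_update_false_vertex, stateHH_update_true_vertex, sgn_stateHH_false,
    sgn_stateHH_true, sH, stab_single, zero_add, neg_smul]
  abel

/-- The Levi-Civita symbol `ε_{ijk}`, `k` being the third index. -/
def leviCivita (i j : Fin 3) : ℤ := if j = i + 1 then 1 else if i = j + 1 then -1 else 0

lemma sum_leviCivita_left (j : Fin 3) : ∑ i, leviCivita i j = 0 := by
  fin_cases j <;> rfl

lemma sum_leviCivita_right (i : Fin 3) : ∑ j, leviCivita i j = 0 := by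
  fin_cases i <;> rfl

noncomputable def thetaChain : SC ends :=
  koszul • ∑ i, ∑ j, leviCivita i j • Finsupp.single ((0 : Fin 3 →₀ ℕ), stateHH i j) 1

lemma thetaChain_mem_hasDW : thetaChain ∈ hasDW ends 2 2 := by
  have hdeg (i j : Fin 3) : degB ends (0, stateHH i j) = 2 := by
    rw [degB, Finset.filter_true_of_mem fun v _ => by cases v <;> rfl]
    rfl
  have hwt (i j : Fin 3) : wtB ends (0, stateHH i j) = 2 := by
    simp [wtB, stateHH]
  exact Submodule.smul_mem _ _ <| Submodule.sum_mem _ fun i _ => Submodule.sum_mem _ fun j _ =>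
    Submodule.smul_mem _ _ <| single_mem_hasDW ends (hdeg i j) (hwt i j) 1

lemma D_thetaChain :
    D ends thetaChain =
      ∑ i, ∑ j, leviCivita i j • (stab ends i (sH true j) - stab ends j (sH false i)) := by
  have hvertex : ∑ i, ∑ j, leviCivita i j • Finsupp.single (0, stateVH j) 1
      = ∑ i, ∑ j, leviCivita i j • (Finsupp.single (0, stateHV i) 1 : SC ends) := by
    rw [Finset.sum_comm]
    simp only [← Finset.sum_smul, sum_leviCivita_left, sum_leviCivita_right, zero_smul,
      Finset.sum_const_zero]
  have hterm (i j : Fin 3) : koszul • D ends (Finsupp.single (0, stateHH i j) 1)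
      = (stab ends i (sH true j) - stab ends j (sH false i))
        - (Finsupp.single (0, stateVH j) 1 - Finsupp.single (0, stateHV i) 1) := by
    rw [D_single_stateHH, smul_sub, smul_smul, smul_smul, koszul_mul_self, one_smul, one_smul]
    abel
  simp only [thetaChain, map_smul, map_sum, Finset.smul_sum, smul_comm koszul, hterm, smul_sub,
    Finset.sum_sub_distrib, hvertex, sub_self, sub_zero]

lemma sum_leviCivita_stab_eq_starCyc_sub :
    ∑ i, ∑ j, leviCivita i j • (stab ends i (sH true j) - stab ends j (sH false i))
      = starCyc₁ - starCyc₂ := by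
  simp only [Fin.sum_univ_three, leviCivita, starCyc₁, starCyc₂, map_sub]
  simp only [Fin.reduceAdd, Fin.reduceEq, if_true, if_false, one_smul, neg_smul, zero_smul,
    add_zero]
  abel

/-- **θ-relation.** In the homology of the configuration spaces
of the theta graph `Θ₃`, the clockwise star classes at the two essential
vertices are equal: `α − α' = 0` in `H₁(B₂(Θ₃))`, i.e. the difference of the
two star cycles is the boundary of a degree-2, weight-2 chain of the
Świątkowski complex of `Θ₃`. -/
theorem theta_relation :
    ∃ z ∈ hasDW ends 2 2, D ends z = starCyc₁ - starCyc₂ :=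
  ⟨thetaChain, thetaChain_mem_hasDW, D_thetaChain.trans sum_leviCivita_stab_eq_starCyc_sub⟩

end Theta3
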